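/- arXiv:2601.10488 — 5 statements merged into one kernel-verified Lean document; each statement's English description precedes it below -/
import Mathlib

section
/- For every p in the upper half-plane ℂ₊, the function u(t,x) = 2·Im(p)/|x - c·t + p|² with c = 1/Im(p) is a solution of the Benjamin–Ono equation ∂ₜu - ∂ₓ|D|u + ∂ₓ(u²) = 0, where |D| = H∂ₓ and H is the Hilbert transform. -/
open MeasureTheory Filter Set Topology

noncomputable section

/-- The Hilbert transform, defined as a principal value:
`Hf(x) = (1/π) p.v. ∫ f(y)/(x-y) dy`. -/
noncomputable def pvHilbert (f : ℝ → ℝ) (x : ℝ) : ℝ :=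
  limUnder (𝓝[>] (0 : ℝ)) fun ε : ℝ =>
    (1 / Real.pi) * ∫ y in {y : ℝ | ε < |x - y|}, f y / (x - y)

/-!
Write `z = x - c t + p`. The profile is `u = -2 Im z⁻¹`, so `∂ₓ u = 2 Im z⁻²` and `∂ₜ u = -c ∂ₓ u`.
For `Im q > 0` the function `y ↦ (y + q)⁻²` is the boundary value of a function holomorphic and
decaying in the upper half-plane, so its Hilbert transform is `-i (x + q)⁻²`. Here this is computed
by hand: `(y + q)⁻² / (x - y)` has a primitive built from `log ((y + q) / (y - x))`, which vanishes
at `±∞` and jumps by `-π i` across `y = x`. Taking imaginary parts gives `H ∂ₓ u = -2 Re z⁻²`, and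
the equation becomes the rational identity `-(2 / Im z) Im z⁻² - 4 Re z⁻³ - 8 Im z⁻¹ Im z⁻² = 0`.
-/

lemma setOf_lt_abs_sub_eq (x ε : ℝ) :
    {y : ℝ | ε < |x - y|} = Iio (x - ε) ∪ Ioi (x + ε) := by
  ext y
  simp only [mem_ofPred_eq, mem_union, mem_Iio, mem_Ioi, lt_abs]
  constructor <;> rintro (h | h) <;> first | (left; linarith) | (right; linarith)

theorem tendsto_setIntegral_lt_abs_sub_of_hasDerivAt {E : Type*} [NormedAddCommGroup E]
    [NormedSpace ℝ E] [CompleteSpace E] {f F : ℝ → E} {x : ℝ} {lbot ltop d : E}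
    (hF : ∀ y ≠ x, HasDerivAt F (f y) y)
    (hf : ∀ ε > 0, IntegrableOn f {y | ε < |x - y|})
    (hbot : Tendsto F atBot (𝓝 lbot)) (htop : Tendsto F atTop (𝓝 ltop))
    (hjump : Tendsto (fun ε => F (x - ε) - F (x + ε)) (𝓝[>] 0) (𝓝 d)) :
    Tendsto (fun ε => ∫ y in {y | ε < |x - y|}, f y) (𝓝[>] 0) (𝓝 (d + (ltop - lbot))) := by
  refine (hjump.add_const (ltop - lbot)).congr' ?_
  filter_upwards [self_mem_nhdsWithin] with ε (hε : 0 < ε)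
  have hint := hf ε hε
  rw [setOf_lt_abs_sub_eq] at hint ⊢
  rw [setIntegral_union ((Iic_disjoint_Ioi (by linarith)).mono_left Iio_subset_Iic_self)
      measurableSet_Ioi (hint.mono_set subset_union_left) (hint.mono_set subset_union_right),
    setIntegral_congr_set Iio_ae_eq_Iic,
    integral_Iic_of_hasDerivAt_of_tendsto' (fun y hy => hF y (by simp at hy; linarith))
      ((hint.mono_set subset_union_left).congr_set_ae Iio_ae_eq_Iic.symm) hbot,
    integral_Ioi_of_hasDerivAt_of_tendsto' (fun y hy => hF y (by simp at hy; linarith))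
      (hint.mono_set subset_union_right) htop]
  abel

theorem pvHilbert_im_eq_of_tendsto {g : ℝ → ℂ} {x : ℝ} {L : ℂ}
    (hg : ∀ ε > 0, IntegrableOn (fun y => g y / ((x - y : ℝ) : ℂ)) {y | ε < |x - y|})
    (hL : Tendsto (fun ε => ∫ y in {y | ε < |x - y|}, g y / ((x - y : ℝ) : ℂ)) (𝓝[>] 0)
      (𝓝 L)) :
    pvHilbert (fun y => (g y).im) x = L.im / Real.pi := by
  refine Tendsto.limUnder_eq ?_
  rw [show L.im / Real.pi = 1 / Real.pi * L.im by ring]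
  refine (((Complex.continuous_im.tendsto L).comp hL).const_mul _).congr' ?_
  filter_upwards [self_mem_nhdsWithin] with ε (hε : 0 < ε)
  simp only [Function.comp_apply, ← Complex.div_ofReal_im]
  congr 1
  exact (integral_im (hg ε hε)).symm

section CauchyKernel

open Complex Bornology

variable {q : ℂ} {x : ℝ}

lemma ofReal_add_ne_zero (hq : q.im ≠ 0) (w : ℝ) : (w : ℂ) + q ≠ 0 := by
  intro h
  simpa [hq] using congrArg im h

lemma hasDerivAt_ofReal_add_zpow (m : ℤ) {w : ℝ} (hw : (w : ℂ) + q ≠ 0) :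
    HasDerivAt (fun v : ℝ => ((v : ℂ) + q) ^ m) (m * ((w : ℂ) + q) ^ (m - 1)) w :=
  ((hasDerivAt_zpow m _ (Or.inl hw)).comp_add_const (w : ℂ) q).comp_ofReal

lemma integrable_inv_norm_ofReal_add_sq (hq : q.im ≠ 0) :
    Integrable fun y : ℝ => (‖(y : ℂ) + q‖ ^ 2)⁻¹ := by
  have h := ((integrable_inv_one_add_sq.comp_div hq).comp_add_right q.re).const_mul (q.im ^ 2)⁻¹
  refine h.congr (ae_of_all _ fun y => ?_)
  simp only [Complex.sq_norm, normSq_apply, add_re, ofReal_re, add_im, ofReal_im, zero_add]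
  field_simp
  ring

lemma integrableOn_zpow_neg_two_div (hq : q.im ≠ 0) {ε : ℝ} (hε : 0 < ε) :
    IntegrableOn (fun y : ℝ => ((y : ℂ) + q) ^ (-2 : ℤ) / ((x - y : ℝ) : ℂ))
      {y | ε < |x - y|} := by
  refine Integrable.mono' ((integrable_inv_norm_ofReal_add_sq hq).integrableOn.const_mul ε⁻¹)
    (Measurable.aestronglyMeasurable (by fun_prop)) ?_
  rw [ae_restrict_iff' (measurableSet_lt measurable_const (by fun_prop))]
  refine ae_of_all _ fun y (hy : ε < |x - y|) => ?_
  rw [norm_div, norm_zpow, norm_real, Real.norm_eq_abs, zpow_neg, zpow_ofNat, div_eq_inv_mul]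
  gcongr

lemma mem_slitPlane_ofReal_add_div_sub (hq : q.im ≠ 0) {w : ℝ} (hw : w ≠ x) :
    ((w : ℂ) + q) / ((w : ℂ) - x) ∈ slitPlane := by
  refine mem_slitPlane_iff.2 (Or.inr ?_)
  rw [← ofReal_sub, div_ofReal_im]
  simpa using div_ne_zero hq (sub_ne_zero.2 hw)

lemma hasDerivAt_log_ofReal_add_div_sub (hq : q.im ≠ 0) {w : ℝ} (hw : w ≠ x) :
    HasDerivAt (fun v : ℝ => log (((v : ℂ) + q) / ((v : ℂ) - x)))
      (((w : ℂ) + q)⁻¹ - ((w : ℂ) - x)⁻¹) w := by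
  have hwx : (w : ℂ) - x ≠ 0 := sub_ne_zero.2 (by exact_mod_cast hw)
  have hquot : HasDerivAt (fun v : ℝ => ((v : ℂ) + q) / ((v : ℂ) - x))
      ((1 * ((w : ℂ) - x) - ((w : ℂ) + q) * 1) / ((w : ℂ) - x) ^ 2) w :=
    (((hasDerivAt_id (w : ℂ)).add_const q).div ((hasDerivAt_id (w : ℂ)).sub_const _)
      hwx).comp_ofReal
  refine (hquot.clog_real (mem_slitPlane_ofReal_add_div_sub hq hw)).congr_deriv ?_
  have hwq := ofReal_add_ne_zero hq w
  field_simp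

lemma tendsto_log_ofReal_add_div_sub_cobounded :
    Tendsto (fun w : ℝ => log (((w : ℂ) + q) / ((w : ℂ) - x))) (cobounded ℝ) (𝓝 0) := by
  have hinv : Tendsto (fun w : ℝ => ((w : ℂ) - x)⁻¹) (cobounded ℝ) (𝓝 0) :=
    tendsto_inv₀_cobounded.comp
      ((tendsto_sub_const_cobounded (x : ℂ)).comp (RCLike.tendsto_ofReal_cobounded_cobounded ℂ))
  have hquot : Tendsto (fun w : ℝ => ((w : ℂ) + q) / ((w : ℂ) - x)) (cobounded ℝ) (𝓝 1) := by
    have h := (hinv.const_mul ((x : ℂ) + q)).const_add 1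
    rw [mul_zero, add_zero] at h
    refine h.congr' ?_
    filter_upwards [(tendsto_sub_const_cobounded x).eventually_ne_cobounded 0] with w hw
    have hwx : (w : ℂ) - x ≠ 0 := by exact_mod_cast hw
    field_simp
    ring
  simpa using hquot.clog one_mem_slitPlane

lemma log_neg_sub_log_of_im_pos {a : ℂ} (ha : 0 < a.im) : log (-a) - log a = -(Real.pi * I) := by
  rw [log, log, norm_neg, arg_neg_eq_arg_sub_pi_of_im_pos ha]
  push_cast
  ring

lemma tendsto_log_ofReal_add_div_sub_jump (hq : 0 < q.im) :
    Tendsto (fun ε : ℝ => log ((((x - ε : ℝ) : ℂ) + q) / (((x - ε : ℝ) : ℂ) - x))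
        - log ((((x + ε : ℝ) : ℂ) + q) / (((x + ε : ℝ) : ℂ) - x)))
      (𝓝[>] 0) (𝓝 (-(Real.pi * I))) := by
  set a : ℂ := x + q
  have ha : 0 < a.im := by simpa [a] using hq
  have hcont : ContinuousAt (fun ε : ℝ => log (ε - a) - log (ε + a)) 0 := by
    refine ContinuousAt.sub (ContinuousAt.clog (by fun_prop) ?_)
      (ContinuousAt.clog (by fun_prop) ?_)
    · simpa [mem_slitPlane_iff] using Or.inr ha.ne'
    · simpa [mem_slitPlane_iff] using Or.inr ha.ne'
  have h := hcont.tendsto.mono_left (nhdsWithin_le_nhds (s := Ioi 0))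
  rw [ofReal_zero, zero_sub, zero_add, log_neg_sub_log_of_im_pos ha] at h
  refine h.congr' ?_
  filter_upwards [self_mem_nhdsWithin] with ε (hε : 0 < ε)
  have hεa : (ε : ℂ) - a ≠ 0 := by
    intro h; simpa [ha.ne'] using congrArg im h
  have hεa' : (ε : ℂ) + a ≠ 0 := by
    intro h; simpa [ha.ne'] using congrArg im h
  have hminus : (((x - ε : ℝ) : ℂ) + q) / (((x - ε : ℝ) : ℂ) - x) = ((ε⁻¹ : ℝ) : ℂ) * (ε - a) := by
    push_cast
    rw [sub_sub_cancel_left, div_neg, div_eq_inv_mul]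
    ring
  have hplus : (((x + ε : ℝ) : ℂ) + q) / (((x + ε : ℝ) : ℂ) - x) = ((ε⁻¹ : ℝ) : ℂ) * (ε + a) := by
    push_cast
    rw [add_sub_cancel_left, div_eq_inv_mul]
    ring
  rw [hminus, hplus, log_ofReal_mul (inv_pos.2 hε) hεa, log_ofReal_mul (inv_pos.2 hε) hεa']
  ring

/-- A primitive of `w ↦ (w + q)⁻² / (x - w)` on `ℝ \ {x}`, from the partial fraction decomposition
`(w + q)⁻² (x - w)⁻¹ = a⁻² ((w + q)⁻¹ - (w - x)⁻¹) + a⁻¹ (w + q)⁻²` with `a = x + q`. -/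
def primitiveInvSqDiv (q : ℂ) (x w : ℝ) : ℂ :=
  ((x : ℂ) + q) ^ (-2 : ℤ) * log (((w : ℂ) + q) / ((w : ℂ) - x))
    - ((x : ℂ) + q) ^ (-1 : ℤ) * ((w : ℂ) + q) ^ (-1 : ℤ)

lemma hasDerivAt_primitiveInvSqDiv (hq : q.im ≠ 0) {w : ℝ} (hw : w ≠ x) :
    HasDerivAt (primitiveInvSqDiv q x) (((w : ℂ) + q) ^ (-2 : ℤ) / ((x - w : ℝ) : ℂ)) w := by
  have hwq := ofReal_add_ne_zero hq w
  have hxq := ofReal_add_ne_zero hq x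
  have hxw : (x : ℂ) - w ≠ 0 := sub_ne_zero.2 (by exact_mod_cast hw.symm)
  have hwx : (w : ℂ) - x ≠ 0 := sub_ne_zero.2 (by exact_mod_cast hw)
  refine (((hasDerivAt_log_ofReal_add_div_sub hq hw).const_mul _).sub
    ((hasDerivAt_ofReal_add_zpow (-1) hwq).const_mul _)).congr_deriv ?_
  push_cast
  simp only [zpow_neg, zpow_ofNat]
  field_simp
  ring

lemma tendsto_primitiveInvSqDiv_cobounded :
    Tendsto (primitiveInvSqDiv q x) (cobounded ℝ) (𝓝 0) := by
  have hinv : Tendsto (fun w : ℝ => ((w : ℂ) + q)⁻¹) (cobounded ℝ) (𝓝 0) :=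
    tendsto_inv₀_cobounded.comp
      ((tendsto_add_const_cobounded q).comp (RCLike.tendsto_ofReal_cobounded_cobounded ℂ))
  have h := (tendsto_log_ofReal_add_div_sub_cobounded (q := q) (x := x)).const_mul
    (((x : ℂ) + q) ^ (-2 : ℤ)) |>.sub (hinv.const_mul (((x : ℂ) + q) ^ (-1 : ℤ)))
  rw [mul_zero, mul_zero, sub_zero] at h
  exact h.congr fun w => by simp only [primitiveInvSqDiv, zpow_neg_one]

lemma tendsto_primitiveInvSqDiv_jump (hq : 0 < q.im) :
    Tendsto (fun ε : ℝ => primitiveInvSqDiv q x (x - ε) - primitiveInvSqDiv q x (x + ε))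
      (𝓝[>] 0) (𝓝 (-(Real.pi * I) * ((x : ℂ) + q) ^ (-2 : ℤ))) := by
  have hxq := ofReal_add_ne_zero hq.ne' x
  have hcont : ContinuousAt
      (fun ε : ℝ => (((x - ε : ℝ) : ℂ) + q) ^ (-1 : ℤ) - (((x + ε : ℝ) : ℂ) + q) ^ (-1 : ℤ)) 0 := by
    refine ContinuousAt.sub ?_ ?_ <;>
      exact ContinuousAt.zpow₀ (by fun_prop) _ (Or.inl (by simpa using hxq))
  have hinv := hcont.tendsto.mono_left (nhdsWithin_le_nhds (s := Ioi 0))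
  simp only [add_zero, sub_zero, sub_self] at hinv
  have h := (tendsto_log_ofReal_add_div_sub_jump (x := x) hq).const_mul
    (((x : ℂ) + q) ^ (-2 : ℤ)) |>.sub (hinv.const_mul (((x : ℂ) + q) ^ (-1 : ℤ)))
  rw [mul_zero, sub_zero, mul_comm] at h
  refine h.congr fun ε => ?_
  simp only [primitiveInvSqDiv]
  ring

theorem tendsto_setIntegral_zpow_neg_two_div (hq : 0 < q.im) :
    Tendsto (fun ε => ∫ y in {y | ε < |x - y|}, ((y : ℂ) + q) ^ (-2 : ℤ) / ((x - y : ℝ) : ℂ))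
      (𝓝[>] 0) (𝓝 (-(Real.pi * I) * ((x : ℂ) + q) ^ (-2 : ℤ))) := by
  simpa using tendsto_setIntegral_lt_abs_sub_of_hasDerivAt
    (fun w hw => hasDerivAt_primitiveInvSqDiv hq.ne' hw)
    (fun ε hε => integrableOn_zpow_neg_two_div hq.ne' hε)
    (tendsto_primitiveInvSqDiv_cobounded.mono_left IsOrderBornology.atBot_le_cobounded)
    (tendsto_primitiveInvSqDiv_cobounded.mono_left IsOrderBornology.atTop_le_cobounded)
    (tendsto_primitiveInvSqDiv_jump hq)

end CauchyKernel

theorem HasDerivAt.complex_re {f : ℝ → ℂ} {f' : ℂ} {y : ℝ} (h : HasDerivAt f f' y) :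
    HasDerivAt (fun v => (f v).re) f'.re y :=
  Complex.reCLM.hasFDerivAt.comp_hasDerivAt y h

theorem HasDerivAt.complex_im {f : ℝ → ℂ} {f' : ℂ} {y : ℝ} (h : HasDerivAt f f' y) :
    HasDerivAt (fun v => (f v).im) f'.im y :=
  Complex.imCLM.hasFDerivAt.comp_hasDerivAt y h

section Soliton

open Complex

def solitonProfile (p : ℂ) (y : ℝ) : ℝ := 2 * p.im / ‖(y : ℂ) + p‖ ^ 2

variable {p : ℂ}

lemma solitonProfile_eq_im (p : ℂ) (y : ℝ) :
    solitonProfile p y = -2 * (((y : ℂ) + p) ^ (-1 : ℤ)).im := by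
  rw [solitonProfile, zpow_neg_one, inv_im, ← normSq_eq_norm_sq]
  simp only [add_im, ofReal_im, zero_add]
  ring

lemma solitonProfile_sub (p : ℂ) (s y : ℝ) :
    solitonProfile p (y - s) = solitonProfile (p - s) y := by
  simp only [solitonProfile, sub_im, ofReal_im, sub_zero, ofReal_sub]
  ring_nf

lemma hasDerivAt_solitonProfile (hp : p.im ≠ 0) (y : ℝ) :
    HasDerivAt (solitonProfile p) (2 * (((y : ℂ) + p) ^ (-2 : ℤ)).im) y := by
  rw [show solitonProfile p = _ from funext (solitonProfile_eq_im p)]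
  refine (((hasDerivAt_ofReal_add_zpow (-1) (ofReal_add_ne_zero hp y)).complex_im).const_mul
    (-2)).congr_deriv ?_
  norm_num

lemma hasDerivAt_solitonProfile_const_sub_mul (hp : p.im ≠ 0) (x c t : ℝ) :
    HasDerivAt (fun s => solitonProfile p (x - c * s))
      (2 * (((x : ℂ) + (p - ((c * t : ℝ) : ℂ))) ^ (-2 : ℤ)).im * -c) t := by
  refine ((hasDerivAt_solitonProfile hp (x - c * t)).comp t
    (((hasDerivAt_id t).const_mul c).const_sub x)).congr_deriv ?_
  rw [show (x : ℂ) + (p - ((c * t : ℝ) : ℂ)) = ((x - c * t : ℝ) : ℂ) + p by push_cast; ring]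
  simp

theorem pvHilbert_deriv_solitonProfile (hp : 0 < p.im) (x : ℝ) :
    pvHilbert (deriv (solitonProfile p)) x = -2 * (((x : ℂ) + p) ^ (-2 : ℤ)).re := by
  have hderiv : deriv (solitonProfile p) = fun y : ℝ => (2 * ((y : ℂ) + p) ^ (-2 : ℤ)).im := by
    ext y
    simp [(hasDerivAt_solitonProfile hp.ne' y).deriv]
  rw [hderiv, pvHilbert_im_eq_of_tendsto (L := 2 * (-(Real.pi * I) * ((x : ℂ) + p) ^ (-2 : ℤ)))]
  · rw [show (2 : ℂ) * (-(Real.pi * I) * ((x : ℂ) + p) ^ (-2 : ℤ))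
        = ((-2 * Real.pi : ℝ) : ℂ) * (I * ((x : ℂ) + p) ^ (-2 : ℤ)) by push_cast; ring,
      im_ofReal_mul, I_mul_im]
    field_simp
  · intro ε hε
    simpa only [IntegrableOn, mul_div_assoc] using
      (integrableOn_zpow_neg_two_div hp.ne' hε).const_mul 2
  · simpa only [mul_div_assoc, integral_const_mul] using
      (tendsto_setIntegral_zpow_neg_two_div hp).const_mul 2

lemma hasDerivAt_pvHilbert_deriv_solitonProfile (hp : 0 < p.im) (x : ℝ) :
    HasDerivAt (pvHilbert (deriv (solitonProfile p))) (4 * (((x : ℂ) + p) ^ (-3 : ℤ)).re) x := by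
  rw [show pvHilbert (deriv (solitonProfile p)) = _ from
    funext (pvHilbert_deriv_solitonProfile hp)]
  refine (((hasDerivAt_ofReal_add_zpow (-2) (ofReal_add_ne_zero hp.ne' x)).complex_re).const_mul
    (-2)).congr_deriv ?_
  norm_num
  ring

lemma benjaminOno_identity {z : ℂ} (hz : z.im ≠ 0) :
    2 * (z ^ (-2 : ℤ)).im * -(1 / z.im) - 4 * (z ^ (-3 : ℤ)).re
      + 2 * (-2 * (z ^ (-1 : ℤ)).im) * (2 * (z ^ (-2 : ℤ)).im) = 0 := by
  have hN : normSq z ≠ 0 := (normSq_pos.2 fun h => hz (by simp [h])).ne'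
  simp only [zpow_neg, zpow_ofNat, inv_re, inv_im, pow_succ, pow_zero, one_mul, mul_re, mul_im,
    map_mul]
  rw [normSq_apply] at hN ⊢
  field_simp
  ring

end Soliton

/-- For every `p` in the upper half-plane, the profile
`u(t,x) = 2 Im p / |x - c t + p|²` with `c = 1 / Im p` solves the Benjamin–Ono
equation `∂ₜ u - ∂ₓ |D| u + ∂ₓ (u²) = 0`, where `|D| = H ∂ₓ` with `H` the
Hilbert transform. -/
theorem benjaminOno_soliton (p : ℂ) (hp : 0 < p.im) :
    ∀ t x : ℝ,
      (deriv (fun s : ℝ =>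
          2 * p.im / ‖(((x - (1 / p.im) * s : ℝ) : ℂ) + p)‖ ^ 2) t)
        - (deriv (fun y : ℝ =>
            pvHilbert (fun w : ℝ => deriv (fun v : ℝ =>
              2 * p.im / ‖(((v - (1 / p.im) * t : ℝ) : ℂ) + p)‖ ^ 2) w) y) x)
        + (deriv (fun y : ℝ =>
            (2 * p.im / ‖(((y - (1 / p.im) * t : ℝ) : ℂ) + p)‖ ^ 2) ^ 2) x)
        = 0 := by
  intro t x
  set c := 1 / p.im
  have hq : 0 < (p - ((c * t : ℝ) : ℂ)).im := by simpa using hp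
  have hz : ((x : ℂ) + (p - ((c * t : ℝ) : ℂ))).im = p.im := by simp
  change deriv (fun s => solitonProfile p (x - c * s)) t
      - deriv (pvHilbert (deriv fun v => solitonProfile p (v - c * t))) x
      + deriv (fun y => solitonProfile p (y - c * t) ^ 2) x = 0
  rw [(hasDerivAt_solitonProfile_const_sub_mul hp.ne' x c t).deriv]
  simp only [solitonProfile_sub]
  rw [(hasDerivAt_pvHilbert_deriv_solitonProfile hq x).deriv,
    ((hasDerivAt_solitonProfile hq.ne' x).fun_pow 2).deriv, solitonProfile_eq_im]
  have h := benjaminOno_identity (hz ▸ hp.ne')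
  rw [hz] at h
  simpa only [Nat.cast_ofNat, Nat.add_one_sub_one, pow_one] using h
end
end

section
/- Let f ∈ L²₊(ℝ) be in the domain of X*, i.e. the restriction of its Fourier transform to (0,∞) lies in H¹(0,∞), and let X*f be defined on the Fourier side by (X*f)^(ξ) = i d/dξ f̂(ξ) for ξ > 0. Then X*f(x) = x f(x) + f̂(0⁺)/(2iπ) almost everywhere. -/
open MeasureTheory Filter Set Topology Complex

/-! On the Fourier side `X*` is `i d/dξ`, and integrating `e^{ixξ} g'(ξ)` by parts over `(0, ∞)`
turns it into `-g(0⁺) - ix ∫ e^{ixξ} g(ξ) dξ`: the interior term is `x f(x)`, and the boundary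
term at `0⁺` produces the constant `g(0⁺) / (2iπ)`. -/

theorem hasDerivAt_cexp_I_mul_ofReal (x ξ : ℝ) :
    HasDerivAt (fun ξ : ℝ => cexp (I * x * ξ)) (I * x * cexp (I * x * ξ)) ξ := by
  simpa [mul_comm] using (((hasDerivAt_id (ξ : ℂ)).const_mul (I * x)).cexp).comp_ofReal

theorem MeasureTheory.IntegrableOn.cexp_I_mul_ofReal_mul {φ : ℝ → ℂ} {s : Set ℝ} (x : ℝ)
    (hφ : IntegrableOn φ s) : IntegrableOn (fun ξ : ℝ => cexp (I * x * ξ) * φ ξ) s :=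
  hφ.bdd_mul (c := 1) (by fun_prop) (Eventually.of_forall fun ξ => by simp [norm_exp])

theorem integral_Ioi_cexp_I_mul_mul_deriv {g g' : ℝ → ℂ} {a x : ℝ} {L : ℂ}
    (hg_deriv : ∀ ξ ∈ Ioi a, HasDerivAt g (g' ξ) ξ)
    (hg_L1 : IntegrableOn g (Ioi a)) (hg'_L1 : IntegrableOn g' (Ioi a))
    (htrace : Tendsto g (𝓝[>] a) (𝓝 L)) (hg_top : Tendsto g atTop (𝓝 0)) :
    ∫ ξ in Ioi a, cexp (I * x * ξ) * g' ξ =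
      -(cexp (I * x * a) * L) - I * x * ∫ ξ in Ioi a, cexp (I * x * ξ) * g ξ := by
  have hexp_cont : Continuous fun ξ : ℝ => cexp (I * x * ξ) := by fun_prop
  have h_zero : Tendsto (fun ξ : ℝ => cexp (I * x * ξ) * g ξ) (𝓝[>] a)
      (𝓝 (cexp (I * x * a) * L)) :=
    (hexp_cont.continuousWithinAt.tendsto).mul htrace
  have h_top : Tendsto (fun ξ : ℝ => cexp (I * x * ξ) * g ξ) atTop (𝓝 0) := by
    refine tendsto_zero_iff_norm_tendsto_zero.mpr ((tendsto_norm_zero.comp hg_top).congr fun ξ => ?_)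
    simp [norm_exp]
  have hparts := integral_Ioi_mul_deriv_eq_deriv_mul
    (fun ξ _ => hasDerivAt_cexp_I_mul_ofReal x ξ) hg_deriv
    (hg'_L1.cexp_I_mul_ofReal_mul x)
    (IntegrableOn.congr_fun ((hg_L1.cexp_I_mul_ofReal_mul x).const_mul (I * x))
      (fun ξ _ => (mul_assoc _ _ _).symm) measurableSet_Ioi)
    h_zero h_top
  rw [hparts, zero_sub, ← integral_const_mul]
  simp only [mul_assoc]

theorem Xstar_eq_mul_add_trace_general
    (f g g' h : ℝ → ℂ) (Ival : ℂ)
    (hg_deriv : ∀ ξ ∈ Ioi (0 : ℝ), HasDerivAt g (g' ξ) ξ)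
    (hg_L1 : IntegrableOn g (Ioi (0 : ℝ)))
    (hg'_L1 : IntegrableOn g' (Ioi (0 : ℝ)))
    (htrace : Tendsto g (𝓝[>] (0 : ℝ)) (𝓝 Ival))
    (hg_top : Tendsto g atTop (𝓝 0))
    (hf_inv : ∀ x : ℝ, f x =
      (1 / (2 * Real.pi) : ℂ) * ∫ ξ in Ioi (0 : ℝ), Complex.exp (Complex.I * x * ξ) * g ξ)
    (hh_inv : ∀ x : ℝ, h x =
      (1 / (2 * Real.pi) : ℂ) *
        ∫ ξ in Ioi (0 : ℝ), Complex.exp (Complex.I * x * ξ) * (Complex.I * g' ξ)) :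
    ∀ᵐ x : ℝ, h x = (x : ℂ) * f x + Ival / (2 * Complex.I * Real.pi) := by
  refine Eventually.of_forall fun x => ?_
  have hparts := integral_Ioi_cexp_I_mul_mul_deriv (x := x) hg_deriv hg_L1 hg'_L1 htrace hg_top
  simp only [ofReal_zero, mul_zero, exp_zero, one_mul] at hparts
  have hpull : ∫ ξ in Ioi (0 : ℝ), cexp (I * x * ξ) * (I * g' ξ) =
      I * ∫ ξ in Ioi (0 : ℝ), cexp (I * x * ξ) * g' ξ := by
    rw [← integral_const_mul]
    exact integral_congr_ae (Eventually.of_forall fun ξ => by ring)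
  have hπ : (Real.pi : ℂ) ≠ 0 := ofReal_ne_zero.mpr Real.pi_ne_zero
  rw [hh_inv, hf_inv, hpull, hparts]
  field_simp
  linear_combination (-Ival - I * x * ∫ ξ in Ioi (0 : ℝ), cexp (I * x * ξ) * g ξ) * I_sq

/-- Let `f ∈ L²₊(ℝ)` belong to the domain of `X*`: its Fourier transform `g`
(in the convention `f(x) = (1/2π) ∫₀^∞ e^{ixξ} g(ξ) dξ`, with `g` supported in
`[0,∞)`) restricted to `(0,∞)` lies in `H¹(0,∞)`, with derivative `g'` and
trace `Ival = g(0⁺)`.  Let `h = X* f` be defined on the Fourier side by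
`ĥ(ξ) = i g'(ξ)` for `ξ > 0`.  Then `X* f (x) = x f(x) + g(0⁺)/(2iπ)`
almost everywhere. -/
theorem Xstar_eq_mul_add_trace
    (f g g' h : ℝ → ℂ) (Ival : ℂ)
    (hf2 : MemLp f 2 (volume : Measure ℝ))
    (hg_deriv : ∀ ξ ∈ Ioi (0 : ℝ), HasDerivAt g (g' ξ) ξ)
    (hg_L2 : MemLp g 2 (volume.restrict (Ioi (0 : ℝ))))
    (hg'_L2 : MemLp g' 2 (volume.restrict (Ioi (0 : ℝ))))
    (hg_L1 : IntegrableOn g (Ioi (0 : ℝ)))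
    (hg'_L1 : IntegrableOn g' (Ioi (0 : ℝ)))
    (htrace : Tendsto g (𝓝[>] (0 : ℝ)) (𝓝 Ival))
    (hg_top : Tendsto g atTop (𝓝 0))
    (hf_inv : ∀ x : ℝ, f x =
      (1 / (2 * Real.pi) : ℂ) * ∫ ξ in Ioi (0 : ℝ), Complex.exp (Complex.I * x * ξ) * g ξ)
    (hh2 : MemLp h 2 (volume : Measure ℝ))
    (hh_inv : ∀ x : ℝ, h x =
      (1 / (2 * Real.pi) : ℂ) *
        ∫ ξ in Ioi (0 : ℝ), Complex.exp (Complex.I * x * ξ) * (Complex.I * g' ξ)) :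
    ∀ᵐ x : ℝ, h x = (x : ℂ) * f x + Ival / (2 * Complex.I * Real.pi) :=
  Xstar_eq_mul_add_trace_general f g g' h Ival hg_deriv hg_L1 hg'_L1 htrace hg_top hf_inv hh_inv
end

section
/- Let u₀ ∈ H¹(ℝ) be real-valued with xu₀ ∈ L²(ℝ), and let φ be a normalized eigenfunction of the Lax operator L_{u₀} = D - T_{u₀} on L²₊(ℝ) with eigenvalue λ < 0. Then Wu's identities imply Im⟨X*φ, φ⟩ = -|I₊(φ)|²/(4π) = -1/(2|λ|); in particular the parameter p = -⟨X*φ,φ⟩ lies in the upper half-plane with Im p = 1/(2|λ|). -/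
open MeasureTheory Filter Set Topology Complex

/-! The quantity `Im ⟨X*φ, φ⟩` is, on the Fourier side, `(1/2π) Re ∫₀^∞ φ̂' conj φ̂`, and
`2 Re (φ̂' conj φ̂)` is the derivative of `|φ̂|²`; by the fundamental theorem of calculus the
integral is `-|φ̂(0⁺)|²/2 = -|I₊(φ)|²/2`. Wu's identities give `|λ|² |I₊(φ)|² = |⟨φ, Πu₀⟩|² = 2π|λ|`,
hence `Im ⟨X*φ, φ⟩ = -1/(2|λ|)`. -/

theorem integral_Ioi_of_hasDerivAt_of_tendsto_nhdsGT {E : Type*} [NormedAddCommGroup E]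
    [NormedSpace ℝ E] [CompleteSpace E] {f f' : ℝ → E} {a : ℝ} {m₀ m : E}
    (hf₀ : Tendsto f (𝓝[>] a) (𝓝 m₀)) (hderiv : ∀ x ∈ Ioi a, HasDerivAt f (f' x) x)
    (f'int : IntegrableOn f' (Ioi a)) (hf : Tendsto f atTop (𝓝 m)) :
    ∫ x in Ioi a, f' x = m - m₀ := by
  have hupdate : ∀ x ∈ Ioi a, Function.update f a m₀ x = f x := fun x hx =>
    Function.update_of_ne (ne_of_gt hx) _ _
  have hcont : ContinuousWithinAt (Function.update f a m₀) (Ici a) a := by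
    rwa [continuousWithinAt_update_same, Ici_sdiff_left]
  have hderiv' : ∀ x ∈ Ioi a, HasDerivAt (Function.update f a m₀) (f' x) x := fun x hx =>
    (hderiv x hx).congr_of_eventuallyEq <| by
      filter_upwards [Ioi_mem_nhds hx] with y hy using hupdate y hy
  have hf' : Tendsto (Function.update f a m₀) atTop (𝓝 m) := hf.congr' <| by
    filter_upwards [Ioi_mem_atTop a] with y hy using (hupdate y hy).symm
  simpa using integral_Ioi_of_hasDerivAt_of_tendsto hcont hderiv' f'int hf'

theorem re_integral_Ioi_deriv_mul_conj {g g' : ℝ → ℂ} {a : ℝ} {c l : ℂ}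
    (hg₀ : Tendsto g (𝓝[>] a) (𝓝 c)) (hderiv : ∀ x ∈ Ioi a, HasDerivAt g (g' x) x)
    (hint : IntegrableOn (fun x => g' x * starRingEnd ℂ (g x)) (Ioi a))
    (hg : Tendsto g atTop (𝓝 l)) :
    (∫ x in Ioi a, g' x * starRingEnd ℂ (g x)).re = (‖l‖ ^ 2 - ‖c‖ ^ 2) / 2 := by
  have hderiv_sq : ∀ x ∈ Ioi a,
      HasDerivAt (fun y => ‖g y‖ ^ 2) (2 * (g' x * starRingEnd ℂ (g x)).re) x := fun x hx => by
    convert (hderiv x hx).norm_sq using 2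
    rw [Complex.inner, mul_comm]
  have hFTC := integral_Ioi_of_hasDerivAt_of_tendsto_nhdsGT (hg₀.norm.pow 2) hderiv_sq
    (hint.re.const_mul 2) (hg.norm.pow 2)
  have hre : ∫ x in Ioi a, (g' x * starRingEnd ℂ (g x)).re
      = (∫ x in Ioi a, g' x * starRingEnd ℂ (g x)).re := integral_re hint
  rw [integral_const_mul, hre] at hFTC
  linarith

theorem sq_norm_eq_two_pi_div_abs_of_wu {lam : ℝ} {Ival a : ℂ} (hlam : lam < 0)
    (hWu1 : ‖a‖ ^ 2 = -(2 * Real.pi * lam)) (hWu2 : (lam : ℂ) * Ival = -a) :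
    ‖Ival‖ ^ 2 = 2 * Real.pi / |lam| := by
  have hlam_abs : 0 < |lam| := abs_pos.mpr hlam.ne
  have hnorm : |lam| * ‖Ival‖ = ‖a‖ := by
    rw [← Real.norm_eq_abs, ← Complex.norm_real, ← norm_mul, hWu2, norm_neg]
  have hsq : |lam| ^ 2 * ‖Ival‖ ^ 2 = 2 * Real.pi * |lam| := by
    rw [← mul_pow, hnorm, hWu1, abs_of_neg hlam]
    ring
  field_simp
  nlinarith

theorem soliton_parameter_in_upper_half_plane_general
    (g g' : ℝ → ℂ) (lam : ℝ) (hlam : lam < 0) (Ival a : ℂ)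
    (hg_deriv : ∀ ξ ∈ Ioi (0 : ℝ), HasDerivAt g (g' ξ) ξ)
    (htrace : Tendsto g (𝓝[>] (0 : ℝ)) (𝓝 Ival))
    (hg_top : Tendsto g atTop (𝓝 0))
    (hint : IntegrableOn (fun ξ => g' ξ * (starRingEnd ℂ) (g ξ)) (Ioi (0 : ℝ)))
    (hWu1 : (‖a‖) ^ 2 = -(2 * Real.pi * lam))
    (hWu2 : (lam : ℂ) * Ival = -a) :
    ((1 / (2 * Real.pi) : ℂ) *
        ∫ ξ in Ioi (0 : ℝ), Complex.I * g' ξ * (starRingEnd ℂ) (g ξ)).im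
        = -(‖Ival‖) ^ 2 / (4 * Real.pi) ∧
    ((1 / (2 * Real.pi) : ℂ) *
        ∫ ξ in Ioi (0 : ℝ), Complex.I * g' ξ * (starRingEnd ℂ) (g ξ)).im
        = -(1 / (2 * |lam|)) ∧
    (-((1 / (2 * Real.pi) : ℂ) *
        ∫ ξ in Ioi (0 : ℝ), Complex.I * g' ξ * (starRingEnd ℂ) (g ξ))).im
        = 1 / (2 * |lam|) ∧
    0 < (-((1 / (2 * Real.pi) : ℂ) *
        ∫ ξ in Ioi (0 : ℝ), Complex.I * g' ξ * (starRingEnd ℂ) (g ξ))).im := by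
  have hre := re_integral_Ioi_deriv_mul_conj htrace hg_deriv hint hg_top
  have him : ((1 / (2 * Real.pi) : ℂ) *
      ∫ ξ in Ioi (0 : ℝ), Complex.I * g' ξ * (starRingEnd ℂ) (g ξ)).im
      = -‖Ival‖ ^ 2 / (4 * Real.pi) := by
    simp_rw [mul_assoc Complex.I, integral_const_mul]
    rw [← Complex.ofReal_ofNat, ← Complex.ofReal_mul, ← Complex.ofReal_one,
      ← Complex.ofReal_div, Complex.im_ofReal_mul, Complex.I_mul_im, hre, norm_zero]
    ring
  have hval : -‖Ival‖ ^ 2 / (4 * Real.pi) = -(1 / (2 * |lam|)) := by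
    rw [sq_norm_eq_two_pi_div_abs_of_wu hlam hWu1 hWu2]
    field_simp
    ring
  have hlam_abs : 0 < |lam| := abs_pos.mpr hlam.ne
  refine ⟨him, him.trans hval, ?_, ?_⟩
  · rw [Complex.neg_im, him, hval, neg_neg]
  · rw [Complex.neg_im, him, hval, neg_neg]
    positivity

/-- Soliton parameters from Wu's identities.  Let `φ` be a normalized
eigenfunction of the Lax operator `L_{u₀}` with eigenvalue `lam < 0`, described
on the Fourier side by `g = φ̂ ∈ H¹(0,∞)` (with derivative `g'`), trace
`Ival = I₊(φ) = φ̂(0⁺)`, and let `a = ⟨φ, Πu₀⟩`.  The inner product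
`ip = ⟨X*φ, φ⟩` is expressed on the Fourier side (Plancherel) as
`ip = (1/2π) ∫₀^∞ i g'(ξ) conj(g(ξ)) dξ`.  Then Wu's identities
`|a|² = -2π lam` and `lam · I₊ = -a` imply
`Im ⟨X*φ, φ⟩ = -|I₊(φ)|²/(4π) = -1/(2|lam|)`; in particular
`p = -⟨X*φ, φ⟩` lies in the upper half-plane with `Im p = 1/(2|lam|)`. -/
theorem soliton_parameter_in_upper_half_plane
    (g g' : ℝ → ℂ) (lam : ℝ) (hlam : lam < 0) (Ival a : ℂ)
    (hg_deriv : ∀ ξ ∈ Ioi (0 : ℝ), HasDerivAt g (g' ξ) ξ)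
    (hg_L2 : MemLp g 2 (volume.restrict (Ioi (0 : ℝ))))
    (hg'_L2 : MemLp g' 2 (volume.restrict (Ioi (0 : ℝ))))
    (hnorm : (1 / (2 * Real.pi)) * ∫ ξ in Ioi (0 : ℝ), ‖g ξ‖ ^ 2 = 1)
    (htrace : Tendsto g (𝓝[>] (0 : ℝ)) (𝓝 Ival))
    (hg_top : Tendsto g atTop (𝓝 0))
    (hint : IntegrableOn (fun ξ => g' ξ * (starRingEnd ℂ) (g ξ)) (Ioi (0 : ℝ)))
    (hWu1 : (‖a‖) ^ 2 = -(2 * Real.pi * lam))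
    (hWu2 : (lam : ℂ) * Ival = -a) :
    ((1 / (2 * Real.pi) : ℂ) *
        ∫ ξ in Ioi (0 : ℝ), Complex.I * g' ξ * (starRingEnd ℂ) (g ξ)).im
        = -(‖Ival‖) ^ 2 / (4 * Real.pi) ∧
    ((1 / (2 * Real.pi) : ℂ) *
        ∫ ξ in Ioi (0 : ℝ), Complex.I * g' ξ * (starRingEnd ℂ) (g ξ)).im
        = -(1 / (2 * |lam|)) ∧
    (-((1 / (2 * Real.pi) : ℂ) *
        ∫ ξ in Ioi (0 : ℝ), Complex.I * g' ξ * (starRingEnd ℂ) (g ξ))).im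
        = 1 / (2 * |lam|) ∧
    0 < (-((1 / (2 * Real.pi) : ℂ) *
        ∫ ξ in Ioi (0 : ℝ), Complex.I * g' ξ * (starRingEnd ℂ) (g ξ))).im :=
  soliton_parameter_in_upper_half_plane_general g g' lam hlam Ival a hg_deriv htrace hg_top hint
    hWu1 hWu2
end

section
/- Let u₀ ∈ H¹(ℝ) be real-valued with xu₀ ∈ L²(ℝ) and let φ ∈ L²₊(ℝ) be an eigenfunction of L_{u₀} = D - T_{u₀} with negative eigenvalue λ. Then φ belongs to the domain of X*, i.e. the restriction of φ̂ to (0,∞) is in H¹(0,∞). -/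
open MeasureTheory Filter Set Topology Complex
open scoped ENNReal

/-! On `(0, ∞)` the eigenvalue equation says `(ξ - λ) g = c (w ⋆ g)` with `c = 1/2π`, where
`(w ⋆ g)(ξ) = ∫ w (ξ - η) g η`. Since `w ∈ H¹` and `g ∈ L²`, the convolution `w ⋆ g` is
differentiable with derivative `w' ⋆ g` (Fubini and the fundamental theorem of calculus), and
`w' ⋆ g` is continuous, because translations act continuously on `L²`, and bounded by
Cauchy–Schwarz. Dividing by `ξ - λ`, which stays `≥ -λ > 0`, gives
`g' = (c (w' ⋆ g) - g) / (ξ - λ)`: a bounded function times `(ξ - λ)⁻¹ ∈ L²(0, ∞)`, minus an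
`L²` function times a bounded one. -/

section Holder

variable {α E F G : Type*} [MeasurableSpace α] {μ : Measure α}
  [NormedAddCommGroup E] [NormedSpace ℝ E] [NormedAddCommGroup F] [NormedSpace ℝ F]
  [NormedAddCommGroup G] [NormedSpace ℝ G]
  (B : E →L[ℝ] F →L[ℝ] G) {p q : ℝ≥0∞} [p.HolderConjugate q] {f : α → E} {g : α → F}

theorem ContinuousLinearMap.integrable_of_memLp_of_memLp (hf : MemLp f p μ) (hg : MemLp g q μ) :
    Integrable (fun x => B (f x) (g x)) μ :=
  memLp_one_iff_integrable.1 (B.memLp_of_bilin 1 hf hg)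

theorem ContinuousLinearMap.integral_norm_le_of_memLp (hf : MemLp f p μ) (hg : MemLp g q μ) :
    ∫ x, ‖B (f x) (g x)‖ ∂μ ≤ ‖B‖ * (eLpNorm f p μ).toReal * (eLpNorm g q μ).toReal := by
  have holder : eLpNorm (fun x => B (f x) (g x)) 1 μ ≤ ‖B‖₊ * eLpNorm f p μ * eLpNorm g q μ :=
    eLpNorm_le_eLpNorm_mul_eLpNorm_of_nnnorm hf.1 hg.1 (B · ·) ‖B‖₊
      (.of_forall fun _ => B.le_opNorm₂ _ _)
  rw [integral_norm_eq_lintegral_enorm (B.integrable_of_memLp_of_memLp hf hg).1,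
    ← eLpNorm_one_eq_lintegral_enorm]
  refine (ENNReal.toReal_mono (by finiteness [hf.2.ne, hg.2.ne]) holder).trans_eq ?_
  simp [ENNReal.toReal_mul]

end Holder

theorem intervalIntegral.integral_comp_sub_right_eq_sub_of_hasDerivAt {E : Type*}
    [NormedAddCommGroup E] [NormedSpace ℝ E] [CompleteSpace E] {w w' : ℝ → E}
    (hderiv : ∀ x, HasDerivAt w (w' x) x) (hw' : LocallyIntegrable w') (a b η : ℝ) :
    ∫ s in a..b, w' (s - η) = w (b - η) - w (a - η) := by
  rw [intervalIntegral.integral_comp_sub_right]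
  exact intervalIntegral.integral_eq_sub_of_hasDerivAt (fun x _ => hderiv x)
    (hw'.integrableOn_isCompact isCompact_uIcc).intervalIntegrable

section Convolution

variable {E F G : Type*}
  [NormedAddCommGroup E] [NormedSpace ℝ E] [NormedAddCommGroup F] [NormedSpace ℝ F]
  [NormedAddCommGroup G] [NormedSpace ℝ G]
  (B : E →L[ℝ] F →L[ℝ] G) {p q : ℝ≥0∞} [p.HolderConjugate q] {f : ℝ → E} {g : ℝ → F}

theorem ContinuousLinearMap.integrable_comp_sub_left (hf : MemLp f p) (hg : MemLp g q) (x : ℝ) :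
    Integrable (fun η => B (f (x - η)) (g η)) :=
  B.integrable_of_memLp_of_memLp
    (hf.comp_measurePreserving (Measure.measurePreserving_sub_left _ x)) hg

theorem ContinuousLinearMap.integral_norm_comp_sub_left_le (hf : MemLp f p) (hg : MemLp g q)
    (x : ℝ) :
    ∫ η, ‖B (f (x - η)) (g η)‖ ≤ ‖B‖ * (eLpNorm f p).toReal * (eLpNorm g q).toReal := by
  have hτ := Measure.measurePreserving_sub_left (volume : Measure ℝ) x
  have h := B.integral_norm_le_of_memLp (hf.comp_measurePreserving hτ) hg
  rwa [eLpNorm_comp_measurePreserving hf.1 hτ] at h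

variable [CompleteSpace G]

/-- The integral is the `Lp`–`Lq` pairing of `g` with the reflected translate of `f`, and
translations act continuously on `Lp` for `p < ∞`. -/
theorem ContinuousLinearMap.continuous_integral_comp_sub_left (hp : p ≠ ∞) (hf : MemLp f p)
    (hg : MemLp g q) : Continuous fun x => ∫ η, B (f (x - η)) (g η) := by
  have : Fact (1 ≤ p) := ⟨ENNReal.HolderConjugate.one_le p q⟩
  have : Fact (1 ≤ q) := ⟨ENNReal.HolderConjugate.one_le q p⟩
  let τ : C(ℝ, C(ℝ, ℝ)) := ContinuousMap.curry ⟨fun z : ℝ × ℝ => z.1 - z.2, continuous_sub⟩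
  have hτ : ∀ x, MeasurePreserving (τ x) volume volume := fun x =>
    Measure.measurePreserving_sub_left _ x
  have hpairing : (fun x => ∫ η, B (f (x - η)) (g η)) = fun x =>
      B.lpPairing volume p q (Lp.compMeasurePreserving _ (hτ x) (hf.toLp f)) (hg.toLp g) := by
    ext x
    rw [Lp.toLp_compMeasurePreserving, lpPairing_eq_integral]
    refine integral_congr_ae ?_
    filter_upwards [MemLp.coeFn_toLp (hf.comp_measurePreserving (hτ x)), hg.coeFn_toLp]
      with η hfη hgη
    rw [hfη, hgη]
    rfl
  rw [hpairing]
  exact (B.lpPairing volume p q).continuous₂.comp₂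
    (continuous_const.compMeasurePreservingLp τ.continuous hτ hp) continuous_const

theorem ContinuousLinearMap.memLp_top_integral_comp_sub_left (hp : p ≠ ∞) (hf : MemLp f p)
    (hg : MemLp g q) (μ : Measure ℝ) : MemLp (fun x => ∫ η, B (f (x - η)) (g η)) ∞ μ :=
  memLp_top_of_bound (B.continuous_integral_comp_sub_left hp hf hg).aestronglyMeasurable _
    (.of_forall fun x =>
      (norm_integral_le_integral_norm _).trans (B.integral_norm_comp_sub_left_le hf hg x))

variable [CompleteSpace E] {w w' : ℝ → E}

theorem ContinuousLinearMap.integral_comp_sub_left_sub_eq_intervalIntegral (hw : MemLp w p)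
    (hw' : MemLp w' p) (hderiv : ∀ x, HasDerivAt w (w' x) x) (hg : MemLp g q) {a b : ℝ}
    (hab : a ≤ b) :
    (∫ η, B (w (b - η)) (g η)) - ∫ η, B (w (a - η)) (g η)
      = ∫ s in a..b, ∫ η, B (w' (s - η)) (g η) := by
  have hw'_loc : LocallyIntegrable w' :=
    hw'.locallyIntegrable (ENNReal.HolderConjugate.one_le p q)
  have hw'_meas : StronglyMeasurable w' := by
    rw [show w' = deriv w from funext fun x => (hderiv x).deriv.symm]
    exact stronglyMeasurable_deriv w
  have hprod : Integrable (Function.uncurry fun η s => B (w' (s - η)) (g η))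
      ((volume : Measure ℝ).prod (volume.restrict (Ioc a b))) := by
    have hmeas : AEStronglyMeasurable (Function.uncurry fun η s => B (w' (s - η)) (g η))
        ((volume : Measure ℝ).prod (volume.restrict (Ioc a b))) :=
      B.aestronglyMeasurable_comp₂
        (hw'_meas.comp_measurable (measurable_snd.sub measurable_fst)).aestronglyMeasurable
        hg.1.comp_fst
    refine (integrable_prod_iff' hmeas).2
      ⟨.of_forall fun s => B.integrable_comp_sub_left hw' hg s, ?_⟩
    refine (integrable_const (‖B‖ * (eLpNorm w' p).toReal * (eLpNorm g q).toReal)).mono'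
      hmeas.prod_swap.norm.integral_prod_right' (.of_forall fun s => ?_)
    rw [Real.norm_of_nonneg (integral_nonneg fun _ => norm_nonneg _)]
    exact B.integral_norm_comp_sub_left_le hw' hg s
  calc (∫ η, B (w (b - η)) (g η)) - ∫ η, B (w (a - η)) (g η)
      = ∫ η, B (∫ s in a..b, w' (s - η)) (g η) := by
        rw [← integral_sub (B.integrable_comp_sub_left hw hg b)
          (B.integrable_comp_sub_left hw hg a)]
        simp only [intervalIntegral.integral_comp_sub_right_eq_sub_of_hasDerivAt hderiv hw'_loc,
          map_sub, sub_apply]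
    _ = ∫ η, ∫ s in a..b, B (w' (s - η)) (g η) := by
        congr 1 with η
        have hint : IntervalIntegrable (fun s => w' (s - η)) volume a b := by
          simpa using ((hw'_loc.integrableOn_isCompact isCompact_uIcc).intervalIntegrable
            (a := a - η) (b := b - η)).comp_sub_right η
        exact ((B.flip (g η)).intervalIntegral_comp_comm hint).symm
    _ = ∫ s in a..b, ∫ η, B (w' (s - η)) (g η) := by
        simp only [intervalIntegral.integral_of_le hab]
        exact integral_integral_swap hprod

theorem ContinuousLinearMap.hasDerivAt_integral_comp_sub_left (hp : p ≠ ∞) (hw : MemLp w p)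
    (hw' : MemLp w' p) (hderiv : ∀ x, HasDerivAt w (w' x) x) (hg : MemLp g q) (x : ℝ) :
    HasDerivAt (fun y => ∫ η, B (w (y - η)) (g η)) (∫ η, B (w' (x - η)) (g η)) x := by
  have hcont := B.continuous_integral_comp_sub_left hp hw' hg
  refine ((hcont.integral_hasStrictDerivAt (x - 1) x).hasDerivAt.const_add
    (∫ η, B (w (x - 1 - η)) (g η))).congr_of_eventuallyEq ?_
  filter_upwards [Ioi_mem_nhds (sub_one_lt x)] with y hy
  rw [← B.integral_comp_sub_left_sub_eq_intervalIntegral hw hw' hderiv hg hy.le, add_sub_cancel]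

end Convolution

theorem integrableOn_Ioi_inv_sub_sq {lam a : ℝ} (h : lam < a) :
    IntegrableOn (fun ξ : ℝ => ((ξ - lam) ^ 2)⁻¹) (Ioi a) := by
  refine integrableOn_Ioi_deriv_of_nonneg' (g := fun ξ => -(ξ - lam)⁻¹) (l := 0)
    (fun ξ hξ => ?_) (fun ξ _ => by positivity) ?_
  · have hne : ξ - lam ≠ 0 := (sub_pos.2 (h.trans_le hξ)).ne'
    exact (((hasDerivAt_id' ξ).sub_const lam).inv hne).neg.congr_deriv (by ring)
  · simpa [sub_eq_add_neg] using
      (tendsto_inv_atTop_zero.comp (tendsto_atTop_add_const_right _ (-lam) tendsto_id)).neg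

theorem memLp_two_inv_ofReal_sub {lam a : ℝ} (h : lam < a) :
    MemLp (fun ξ : ℝ => ((ξ : ℂ) - lam)⁻¹) 2 (volume.restrict (Ioi a)) := by
  refine (memLp_two_iff_integrable_sq_norm (by fun_prop)).2
    ((integrableOn_Ioi_inv_sub_sq h).congr_fun (fun ξ _ => ?_) measurableSet_Ioi)
  simp [← ofReal_sub, norm_inv, inv_pow, sq_abs]

theorem norm_inv_ofReal_sub_le {lam a ξ : ℝ} (h : lam < a) (hξ : a ≤ ξ) :
    ‖((ξ : ℂ) - lam)⁻¹‖ ≤ (a - lam)⁻¹ := by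
  rw [← ofReal_sub, norm_inv, norm_real, Real.norm_of_nonneg (by linarith)]
  exact inv_anti₀ (sub_pos.2 h) (by linarith)

theorem hasDerivAt_of_mul_sub_ofReal_eq {f F : ℝ → ℂ} {F' : ℂ} {lam x : ℝ} (hx : x ≠ lam)
    (hF : HasDerivAt F F' x) (heq : ∀ᶠ ξ : ℝ in 𝓝 x, ((ξ : ℂ) - lam) * f ξ = F ξ) :
    HasDerivAt f ((F' - f x) / ((x : ℂ) - lam)) x := by
  have hne : ((x : ℂ) - lam) ≠ 0 := sub_ne_zero.2 (by exact_mod_cast hx)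
  have hquot := hF.div ((hasDerivAt_id (x : ℂ)).comp_ofReal.sub_const (lam : ℂ)) hne
  refine (hquot.congr_of_eventuallyEq ?_).congr_deriv ?_
  · have hne' : ∀ᶠ ξ : ℝ in 𝓝 x, ((ξ : ℂ) - lam) ≠ 0 :=
      ((continuous_ofReal.sub continuous_const).tendsto x).eventually_ne hne
    filter_upwards [heq, hne'] with ξ hξ hξ'
    simp only [Pi.div_apply, id, ← hξ, mul_div_cancel_left₀ _ hξ']
  · simp only [id, ← heq.self_of_nhds]
    field_simp

theorem exists_hasDerivAt_memLp_two_of_mul_sub_ofReal_eq {f F F' : ℝ → ℂ} {lam a : ℝ}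
    (hlam : lam < a) (hf : MemLp f 2 (volume.restrict (Ioi a)))
    (hF : ∀ x ∈ Ioi a, HasDerivAt F (F' x) x) (hF' : MemLp F' ∞ (volume.restrict (Ioi a)))
    (heq : ∀ ξ ∈ Ioi a, ((ξ : ℂ) - lam) * f ξ = F ξ) :
    ∃ f' : ℝ → ℂ, (∀ ξ ∈ Ioi a, HasDerivAt f (f' ξ) ξ) ∧
      MemLp f' 2 (volume.restrict (Ioi a)) := by
  refine ⟨fun ξ => (F' ξ - f ξ) / ((ξ : ℂ) - lam), fun ξ hξ => ?_, ?_⟩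
  · exact hasDerivAt_of_mul_sub_ofReal_eq (hlam.trans hξ).ne' (hF ξ hξ)
      (eventually_of_mem (isOpen_Ioi.mem_nhds hξ) heq)
  have hinv_top : MemLp (fun ξ : ℝ => ((ξ : ℂ) - lam)⁻¹) ∞ (volume.restrict (Ioi a)) :=
    memLp_top_of_bound (by fun_prop) (a - lam)⁻¹ <| (ae_restrict_mem measurableSet_Ioi).mono
      fun ξ hξ => norm_inv_ofReal_sub_le hlam (le_of_lt hξ)
  simp only [div_eq_mul_inv, sub_mul]
  exact ((memLp_two_inv_ofReal_sub hlam).mul' (r := 2) hF').sub (hinv_top.mul' (r := 2) hf)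

/-- `g` is `φ̂` and `w` is `û₀`. -/
theorem eigenfunction_mem_domain_Xstar_general
    (g w w' : ℝ → ℂ) (lam : ℝ) (hlam : lam < 0)
    (hg_L2 : MemLp g 2 (volume : Measure ℝ))
    (hw_L2 : MemLp w 2 (volume : Measure ℝ))
    (hw_deriv : ∀ ξ : ℝ, HasDerivAt w (w' ξ) ξ)
    (hw'_L2 : MemLp w' 2 (volume : Measure ℝ))
    (heigen : ∀ ξ ∈ Ioi (0 : ℝ),
      ((ξ : ℂ) - lam) * g ξ = (1 / (2 * Real.pi) : ℂ) * ∫ η : ℝ, w (ξ - η) * g η) :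
    ∃ g' : ℝ → ℂ,
      (∀ ξ ∈ Ioi (0 : ℝ), HasDerivAt g (g' ξ) ξ) ∧
      MemLp g' 2 (volume.restrict (Ioi (0 : ℝ))) := by
  set B := ContinuousLinearMap.mul ℝ ℂ
  have hderiv (x : ℝ) : HasDerivAt (fun y => ∫ η, w (y - η) * g η)
      (∫ η, w' (x - η) * g η) x := by
    simpa only [B, ContinuousLinearMap.mul_apply'] using
      B.hasDerivAt_integral_comp_sub_left ENNReal.ofNat_ne_top hw_L2 hw'_L2 hw_deriv hg_L2 x
  have hconv'_top : MemLp (fun x => ∫ η, w' (x - η) * g η) ∞ (volume.restrict (Ioi 0)) := by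
    simpa only [B, ContinuousLinearMap.mul_apply'] using
      B.memLp_top_integral_comp_sub_left ENNReal.ofNat_ne_top hw'_L2 hg_L2 _
  exact exists_hasDerivAt_memLp_two_of_mul_sub_ofReal_eq hlam (hg_L2.restrict _)
    (fun x _ => (hderiv x).const_mul _) (hconv'_top.const_mul _) heigen

/-- Let `φ ∈ L²₊(ℝ)` be an eigenfunction of `L_{u₀} = D - T_{u₀}` with negative
eigenvalue `lam`, described on the Fourier side by `g = φ̂` (supported in
`[0,∞)`, square integrable), where the eigenvalue equation reads
`(ξ - lam) g(ξ) = (1/2π) (û₀ * g)(ξ)` for `ξ > 0`.  Here `u₀ ∈ H¹` is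
real-valued with `x u₀ ∈ L²`, so that `w = û₀ ∈ H¹(ℝ)` (with derivative `w'`).
Then `φ` belongs to the domain of `X*`: the restriction of `g` to `(0,∞)`
belongs to `H¹(0,∞)`. -/
theorem eigenfunction_mem_domain_Xstar
    (g w w' : ℝ → ℂ) (lam : ℝ) (hlam : lam < 0)
    (hg_supp : ∀ ξ ≤ (0 : ℝ), g ξ = 0)
    (hg_L2 : MemLp g 2 (volume : Measure ℝ))
    (hw_L2 : MemLp w 2 (volume : Measure ℝ))
    (hw_deriv : ∀ ξ : ℝ, HasDerivAt w (w' ξ) ξ)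
    (hw'_L2 : MemLp w' 2 (volume : Measure ℝ))
    (heigen : ∀ ξ ∈ Ioi (0 : ℝ),
      ((ξ : ℂ) - lam) * g ξ = (1 / (2 * Real.pi) : ℂ) * ∫ η : ℝ, w (ξ - η) * g η) :
    ∃ g' : ℝ → ℂ,
      (∀ ξ ∈ Ioi (0 : ℝ), HasDerivAt g (g' ξ) ξ) ∧
      MemLp g' 2 (volume.restrict (Ioi (0 : ℝ))) :=
  eigenfunction_mem_domain_Xstar_general g w w' lam hlam hg_L2 hw_L2 hw_deriv hw'_L2 heigen
end

section
/- Let λ > 0, z ∈ ℂ₊, t > 0, and suppose f ∈ L²₊(ℝ) with f̂ ∈ H¹(0,∞) and ξ f̂(ξ) ∈ L²(0,∞) satisfies (i d/dξ - 2tξ + 2tλ - z) f̂(ξ) + (t/π)(û₀ * f̂)(ξ) = û₀(ξ) for ξ > 0, where u₀ is real-valued with û₀ ∈ H¹(ℝ) ∩ L¹(ℝ). Then Re⟨-2tξ f̂, (f̂)'⟩_{L²(0,∞)} = t‖f̂‖²_{L²(0,∞)}; in particular the boundary term ξ|f̂(ξ)|² vanishes at both ξ = 0⁺ and ξ = +∞.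 -/
open MeasureTheory Filter Set Topology Complex
open scoped InnerProductSpace

/-!
Put `F ξ = ξ ‖g ξ‖²`. Its derivative `‖g‖² + 2 ⟪ξ g, g'⟫` is integrable on `(0, ∞)` because
`g`, `g'` and `ξ g` lie in `L²`, so `F` has a limit at `+∞`; that limit is `0`, since otherwise
`‖g ξ‖² ≥ c / ξ` near `+∞`, contradicting `g ∈ L²`. At `0⁺`, `F → 0` because `g` has a trace there.
The fundamental theorem of calculus on `(0, ∞)` then gives `∫ ‖g‖² + 2 ∫ ⟪ξ g, g'⟫ = 0`.
-/

theorem MeasureTheory.MemLp.integrable_inner {α 𝕜 E : Type*} {m : MeasurableSpace α}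
    {μ : Measure α} [RCLike 𝕜] [NormedAddCommGroup E] [InnerProductSpace 𝕜 E]
    {f g : α → E} (hf : MemLp f 2 μ) (hg : MemLp g 2 μ) :
    Integrable (fun x => inner 𝕜 (f x) (g x)) μ :=
  (L2.integrable_inner (hf.toLp f) (hg.toLp g)).congr <| by
    filter_upwards [hf.coeFn_toLp, hg.coeFn_toLp] with x hfx hgx
    rw [hfx, hgx]

theorem eq_zero_of_tendsto_mul_of_integrableOn_Ioi {f : ℝ → ℝ} {a L : ℝ}
    (hf : IntegrableOn f (Ioi a)) (hL : Tendsto (fun x => x * f x) atTop (𝓝 L)) : L = 0 := by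
  by_contra hL0
  have hinv : (fun x : ℝ => x⁻¹) =O[atTop] f := by
    have hbdd := ((hL.inv₀ hL0).isBigO_one ℝ).mul (Asymptotics.isBigO_refl f atTop)
    refine (hbdd.congr_right (by simp)).congr' ?_ .rfl
    filter_upwards [hL.eventually_ne hL0] with x hx
    rw [mul_inv, inv_mul_cancel_right₀ (right_ne_zero_of_mul hx)]
  refine not_integrableOn_of_tendsto_norm_atTop_of_deriv_isBigO_filter atTop (Ioi_mem_atTop a)
    ?_ (tendsto_norm_atTop_atTop.comp Real.tendsto_log_atTop) (Real.deriv_log' ▸ hinv) hf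
  filter_upwards [eventually_ne_atTop 0] with x hx using Real.differentiableAt_log hx

section WeightedEnergy

variable {E : Type*} [NormedAddCommGroup E] [InnerProductSpace ℝ E] {g g' : ℝ → E}

theorem HasDerivAt.mul_norm_sq {x : ℝ} {v : E} (hg : HasDerivAt g v x) :
    HasDerivAt (fun y => y * ‖g y‖ ^ 2) (‖g x‖ ^ 2 + 2 * ⟪x • g x, v⟫_ℝ) x :=
  ((hasDerivAt_id' x).mul hg.norm_sq).congr_deriv <| by
    rw [real_inner_smul_left]
    ring

theorem integrableOn_deriv_mul_norm_sq (hg : MemLp g 2 (volume.restrict (Ioi 0)))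
    (hg' : MemLp g' 2 (volume.restrict (Ioi 0)))
    (hxg : MemLp (fun x => x • g x) 2 (volume.restrict (Ioi 0))) :
    IntegrableOn (fun x => ‖g x‖ ^ 2 + 2 * ⟪x • g x, g' x⟫_ℝ) (Ioi 0) :=
  hg.integrable_norm_pow two_ne_zero |>.add ((hxg.integrable_inner hg').const_mul 2)

theorem tendsto_mul_norm_sq_atTop_zero (hderiv : ∀ x ∈ Ioi (0 : ℝ), HasDerivAt g (g' x) x)
    (hg : MemLp g 2 (volume.restrict (Ioi 0))) (hg' : MemLp g' 2 (volume.restrict (Ioi 0)))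
    (hxg : MemLp (fun x => x • g x) 2 (volume.restrict (Ioi 0))) :
    Tendsto (fun x => x * ‖g x‖ ^ 2) atTop (𝓝 0) := by
  have hlim := tendsto_limUnder_of_hasDerivAt_of_integrableOn_Ioi
    (fun x hx => (hderiv x hx).mul_norm_sq) (integrableOn_deriv_mul_norm_sq hg hg' hxg)
  rwa [eq_zero_of_tendsto_mul_of_integrableOn_Ioi (hg.integrable_norm_pow two_ne_zero) hlim]
    at hlim

theorem integral_inner_smul_deriv_eq_neg_half_integral_norm_sq
    (hderiv : ∀ x ∈ Ioi (0 : ℝ), HasDerivAt g (g' x) x)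
    (hg : MemLp g 2 (volume.restrict (Ioi 0))) (hg' : MemLp g' 2 (volume.restrict (Ioi 0)))
    (hxg : MemLp (fun x => x • g x) 2 (volume.restrict (Ioi 0)))
    (h0 : Tendsto (fun x => x * ‖g x‖ ^ 2) (𝓝[>] 0) (𝓝 0)) :
    ∫ x in Ioi 0, ⟪x • g x, g' x⟫_ℝ = -(∫ x in Ioi 0, ‖g x‖ ^ 2) / 2 := by
  have hcont : ContinuousWithinAt (fun x => x * ‖g x‖ ^ 2) (Ici 0) 0 :=
    continuousWithinAt_Ioi_iff_Ici.1 (by simpa [ContinuousWithinAt] using h0)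
  have hFTC := integral_Ioi_of_hasDerivAt_of_tendsto hcont (fun x hx => (hderiv x hx).mul_norm_sq)
    (integrableOn_deriv_mul_norm_sq hg hg' hxg)
    (tendsto_mul_norm_sq_atTop_zero hderiv hg hg' hxg)
  rw [integral_add (hg.integrable_norm_pow two_ne_zero) ((hxg.integrable_inner hg').const_mul 2),
    integral_const_mul, zero_mul, sub_zero] at hFTC
  linarith

end WeightedEnergy

theorem energy_identity_boundary_terms_general
    (t : ℝ)
    (g g' : ℝ → ℂ) (gz : ℂ)
    (hg_deriv : ∀ ξ ∈ Ioi (0 : ℝ), HasDerivAt g (g' ξ) ξ)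
    (hg_L2 : MemLp g 2 (volume.restrict (Ioi (0 : ℝ))))
    (hg'_L2 : MemLp g' 2 (volume.restrict (Ioi (0 : ℝ))))
    (hxg_L2 : MemLp (fun ξ : ℝ => (ξ : ℂ) * g ξ) 2 (volume.restrict (Ioi (0 : ℝ))))
    (htrace : Tendsto g (𝓝[>] (0 : ℝ)) (𝓝 gz)) :
    (∫ ξ in Ioi (0 : ℝ),
        ((-(2 * t * ξ) : ℂ) * g ξ * (starRingEnd ℂ) (g' ξ))).re
      = t * ∫ ξ in Ioi (0 : ℝ), ‖g ξ‖ ^ 2 ∧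
    Tendsto (fun ξ : ℝ => ξ * ‖g ξ‖ ^ 2) (𝓝[>] (0 : ℝ)) (𝓝 0) ∧
    Tendsto (fun ξ : ℝ => ξ * ‖g ξ‖ ^ 2) atTop (𝓝 0) := by
  have hxg : MemLp (fun ξ : ℝ => ξ • g ξ) 2 (volume.restrict (Ioi 0)) := by
    simpa only [Complex.real_smul] using hxg_L2
  have h0 : Tendsto (fun ξ : ℝ => ξ * ‖g ξ‖ ^ 2) (𝓝[>] 0) (𝓝 0) := by
    simpa using (tendsto_id.mono_left nhdsWithin_le_nhds).mul (htrace.norm.pow 2)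
  refine ⟨?_, h0, tendsto_mul_norm_sq_atTop_zero hg_deriv hg_L2 hg'_L2 hxg⟩
  have hint : Integrable (fun ξ : ℝ => (-(2 * t * ξ) : ℂ) * g ξ * (starRingEnd ℂ) (g' ξ))
      (volume.restrict (Ioi 0)) := by
    refine ((hxg_L2.integrable_mul hg'_L2.star).const_mul (-(2 * t) : ℂ)).congr
      (ae_of_all _ fun ξ => ?_)
    simp only [Pi.mul_apply, Pi.star_apply, RCLike.star_def]
    ring
  calc (∫ ξ in Ioi (0 : ℝ), ((-(2 * t * ξ) : ℂ) * g ξ * (starRingEnd ℂ) (g' ξ))).re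
      = ∫ ξ in Ioi (0 : ℝ), -(2 * t) * ⟪ξ • g ξ, g' ξ⟫_ℝ := by
        rw [← RCLike.re_to_complex, ← integral_re hint]
        congr with ξ
        rw [RCLike.re_to_complex, real_inner_comm, Complex.inner, real_smul, ← re_ofReal_mul]
        push_cast
        ring_nf
    _ = t * ∫ ξ in Ioi (0 : ℝ), ‖g ξ‖ ^ 2 := by
        rw [integral_const_mul, integral_inner_smul_deriv_eq_neg_half_integral_norm_sq hg_deriv
          hg_L2 hg'_L2 hxg h0]
        ring

/-- Energy identity in the a priori `L²` bound.  Let `λ > 0`, `z ∈ ℂ₊`,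
`t > 0`, and let `g = f̂` on `(0,∞)` (with derivative `g'`) satisfy
`g ∈ H¹(0,∞)`, `ξ g(ξ) ∈ L²(0,∞)`, a trace at `0⁺`, and the equation
`(i d/dξ - 2tξ + 2tλ - z) g(ξ) + (t/π)(û₀ * g)(ξ) = û₀(ξ)` for `ξ > 0`,
where `u₀` is real-valued and `w = û₀ ∈ H¹(ℝ) ∩ L¹(ℝ)`.
Then `Re ⟨-2tξ g, g'⟩_{L²(0,∞)} = t ‖g‖²_{L²(0,∞)}`; in particular the
boundary term `ξ |g(ξ)|²` vanishes at `ξ = 0⁺` and at `ξ = +∞`. -/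
theorem energy_identity_boundary_terms
    (lam t : ℝ) (hlam : 0 < lam) (ht : 0 < t) (z : ℂ) (hz : 0 < z.im)
    (g g' w w' : ℝ → ℂ) (gz : ℂ) (u₀ : ℝ → ℝ)
    (hg_deriv : ∀ ξ ∈ Ioi (0 : ℝ), HasDerivAt g (g' ξ) ξ)
    (hg_L2 : MemLp g 2 (volume.restrict (Ioi (0 : ℝ))))
    (hg'_L2 : MemLp g' 2 (volume.restrict (Ioi (0 : ℝ))))
    (hxg_L2 : MemLp (fun ξ : ℝ => (ξ : ℂ) * g ξ) 2 (volume.restrict (Ioi (0 : ℝ))))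
    (htrace : Tendsto g (𝓝[>] (0 : ℝ)) (𝓝 gz))
    (hw1 : Integrable w) (hw2 : MemLp w 2 (volume : Measure ℝ))
    (hw_deriv : ∀ ξ : ℝ, HasDerivAt w (w' ξ) ξ)
    (hw'2 : MemLp w' 2 (volume : Measure ℝ))
    (hwhat : ∀ ξ : ℝ, w ξ = ∫ x : ℝ, Complex.exp (-(Complex.I * x * ξ)) * (u₀ x : ℂ))
    (heq : ∀ ξ ∈ Ioi (0 : ℝ),
      Complex.I * g' ξ - 2 * t * ξ * g ξ + 2 * t * lam * g ξ - z * g ξ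
          + (t / Real.pi) * ∫ η : ℝ, w (ξ - η) * g η
        = w ξ) :
    (∫ ξ in Ioi (0 : ℝ),
        ((-(2 * t * ξ) : ℂ) * g ξ * (starRingEnd ℂ) (g' ξ))).re
      = t * ∫ ξ in Ioi (0 : ℝ), ‖g ξ‖ ^ 2 ∧
    Tendsto (fun ξ : ℝ => ξ * ‖g ξ‖ ^ 2) (𝓝[>] (0 : ℝ)) (𝓝 0) ∧
    Tendsto (fun ξ : ℝ => ξ * ‖g ξ‖ ^ 2) atTop (𝓝 0) :=
  energy_identity_boundary_terms_general t g g' gz hg_deriv hg_L2 hg'_L2 hxg_L2 htrace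
end
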